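/- arXiv:2207.06009 — 3 statements merged into one kernel-verified Lean document; each statement's English description precedes it below -/
import Mathlib

section
/- Under the DFM setup, the objective value of the barrier problem is monotonically non-increasing along the DFM iterates: F(x^{k+1}) ≤ F(x^k) for all k ≥ 0, and consequently F(x^k) ≤ F(x^0) for all k ≥ 0. -/
/-!
Since `η j ≤ 1 / |N̄ i|` for `j ∈ N̄ i`, the update `x^{k+1}_i` is a convex combination of `x^k_i`
and the proposals `x^k_i + p^k_{ji}`. So the iterates stay strictly feasible, and by Jensen's
inequality the convex function `f_i^k + ρ B_i` is at most the weighted average of its values at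
`x^k_i` and at the proposals. Summing over `i` and regrouping by proposer `j`, each group is bounded
by its value at the admissible zero move, because `p^k_j` minimizes the local subproblem.
Finally the descent lemma gives `f_i ≤ f_i^k`, with equality at `x^k_i`, so
`F(x^{k+1}) ≤ ∑ (f_i^k + ρ B_i)(x^{k+1}_i) ≤ ∑ (f_i^k + ρ B_i)(x^k_i) = F(x^k)`.
-/

open RealInnerProductSpace Finset

section ConvexCombination

variable {ι E : Type*} [AddCommGroup E] [Module ℝ E] {s : Set E} {t : Finset ι} {w : ι → ℝ}
  {q : E} {p : ι → E}

theorem Convex.add_sum_mem (hs : Convex ℝ s) (h₀ : ∀ i ∈ t, 0 ≤ w i) {v : ℝ}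
    (h₁ : v + ∑ i ∈ t, w i = 1) (hmem : ∀ i ∈ t, p i ∈ s) (hv : 0 ≤ v) (hq : q ∈ s) :
    v • q + ∑ i ∈ t, w i • p i ∈ s := by
  classical
  have := hs.sum_mem (t := insertNone t) (w := fun j => Option.elim j v w)
    (z := fun j => Option.elim j q p) (forall_mem_insertNone.2 ⟨hv, h₀⟩) (by simpa using h₁)
    (forall_mem_insertNone.2 ⟨hq, hmem⟩)
  simpa using this

theorem add_sum_smul_eq_sub_smul_add_sum_smul :
    q + ∑ i ∈ t, w i • p i = (1 - ∑ i ∈ t, w i) • q + ∑ i ∈ t, w i • (q + p i) := by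
  simp only [smul_add, sum_add_distrib, ← sum_smul, sub_smul, one_smul]
  abel

theorem Convex.add_sum_smul_mem (hs : Convex ℝ s) (h₀ : ∀ i ∈ t, 0 ≤ w i)
    (h₁ : ∑ i ∈ t, w i ≤ 1) (hq : q ∈ s) (hmem : ∀ i ∈ t, q + p i ∈ s) :
    q + ∑ i ∈ t, w i • p i ∈ s := by
  rw [add_sum_smul_eq_sub_smul_add_sum_smul]
  exact hs.add_sum_mem h₀ (sub_add_cancel _ _) hmem (sub_nonneg.2 h₁) hq

theorem ConvexOn.map_add_sum_smul_le {f : E → ℝ} (hf : ConvexOn ℝ s f) (h₀ : ∀ i ∈ t, 0 ≤ w i)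
    (h₁ : ∑ i ∈ t, w i ≤ 1) (hq : q ∈ s) (hmem : ∀ i ∈ t, q + p i ∈ s) :
    f (q + ∑ i ∈ t, w i • p i) ≤ (1 - ∑ i ∈ t, w i) * f q + ∑ i ∈ t, w i * f (q + p i) := by
  rw [add_sum_smul_eq_sub_smul_add_sum_smul]
  exact hf.map_add_sum_le h₀ (sub_add_cancel _ _) hmem (sub_nonneg.2 h₁) hq

end ConvexCombination

theorem Finset.sum_sum_comm_of_symm {ι M : Type*} [Fintype ι] [AddCommMonoid M]
    {N : ι → Finset ι} (hN : ∀ i j, j ∈ N i → i ∈ N j) (h : ι → ι → M) :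
    ∑ i, ∑ j ∈ N i, h i j = ∑ j, ∑ i ∈ N j, h i j :=
  Finset.sum_comm' fun i j => ⟨fun hij => ⟨hN i j hij.2, mem_univ _⟩,
    fun hji => ⟨mem_univ _, hN j i hji.1⟩⟩

/-- Node `j` proposes the moves `p j i`, `i ∈ N j`. The averaged point is a convex combination of
`x i` and the proposals, so Jensen's inequality reduces the claim to the local decrease `hopt` at
each proposer after swapping the double sum. -/
theorem sum_map_add_sum_smul_le {ι : Type*} [Fintype ι] {E : ι → Type*}
    [∀ i, AddCommGroup (E i)] [∀ i, Module ℝ (E i)] {S : ∀ i, Set (E i)} {φ : ∀ i, E i → ℝ}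
    (hφ : ∀ i, ConvexOn ℝ (S i) (φ i)) {N : ι → Finset ι} (hN : ∀ i j, j ∈ N i → i ∈ N j)
    {w : ι → ℝ} (hw₀ : ∀ j, 0 ≤ w j) (hw₁ : ∀ i, ∑ j ∈ N i, w j ≤ 1)
    {x : ∀ i, E i} (hx : ∀ i, x i ∈ S i) {p : ι → ∀ i, E i}
    (hp : ∀ j, ∀ i ∈ N j, x i + p j i ∈ S i)
    (hopt : ∀ j, ∑ i ∈ N j, φ i (x i + p j i) ≤ ∑ i ∈ N j, φ i (x i)) :
    ∑ i, φ i (x i + ∑ j ∈ N i, w j • p j i) ≤ ∑ i, φ i (x i) := by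
  calc ∑ i, φ i (x i + ∑ j ∈ N i, w j • p j i)
      ≤ ∑ i, ((1 - ∑ j ∈ N i, w j) * φ i (x i) + ∑ j ∈ N i, w j * φ i (x i + p j i)) :=
        sum_le_sum fun i _ => (hφ i).map_add_sum_smul_le (fun j _ => hw₀ j) (hw₁ i) (hx i)
          fun j hj => hp j i (hN i j hj)
    _ = ∑ i, (1 - ∑ j ∈ N i, w j) * φ i (x i) + ∑ j, w j * ∑ i ∈ N j, φ i (x i + p j i) := by
        rw [sum_add_distrib, sum_sum_comm_of_symm hN fun i j => w j * φ i (x i + p j i)]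
        simp only [mul_sum]
    _ ≤ ∑ i, (1 - ∑ j ∈ N i, w j) * φ i (x i) + ∑ j, w j * ∑ i ∈ N j, φ i (x i) := by
        gcongr _ + ∑ j, _ * ?_ with j
        · exact hw₀ j
        · exact hopt j
    _ = ∑ i, φ i (x i) := by
        simp only [mul_sum, ← sum_sum_comm_of_symm hN (fun i j => w j * φ i (x i)), ← sum_mul,
          ← sum_add_distrib, ← add_mul, sub_add_cancel, one_mul]

theorem SimpleGraph.mem_insert_neighborFinset_comm {V : Type*} (G : SimpleGraph V)
    [DecidableEq V] [∀ v, Fintype (G.neighborSet v)] {i j : V}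
    (h : j ∈ insert i (G.neighborFinset i)) : i ∈ insert j (G.neighborFinset j) := by
  rcases mem_insert.1 h with rfl | hadj
  · exact mem_insert_self _ _
  · exact mem_insert_of_mem ((G.mem_neighborFinset _ _).2 ((G.mem_neighborFinset _ _).1 hadj).symm)

section NbhdWeight

variable {ι : Type*} {N : ι → Finset ι}

noncomputable def nbhdWeight (N : ι → Finset ι) (j : ι) : ℝ :=
  (((N j).sup fun l => (N l).card : ℕ) : ℝ)⁻¹

theorem card_le_sup_card_of_mem {i j : ι} (hij : i ∈ N j) :
    (N i).card ≤ (N j).sup fun l => (N l).card :=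
  le_sup (f := fun l => (N l).card) hij

theorem nbhdWeight_pos (hself : ∀ i, i ∈ N i) (j : ι) : 0 < nbhdWeight N j :=
  inv_pos.2 <| by
    exact_mod_cast (card_pos.2 ⟨j, hself j⟩).trans_le (card_le_sup_card_of_mem (hself j))

theorem sum_nbhdWeight_le_one (hself : ∀ i, i ∈ N i) (hN : ∀ i j, j ∈ N i → i ∈ N j) (i : ι) :
    ∑ j ∈ N i, nbhdWeight N j ≤ 1 := by
  have hcard : (0 : ℝ) < (N i).card := by exact_mod_cast card_pos.2 ⟨i, hself i⟩
  calc ∑ j ∈ N i, nbhdWeight N j ≤ ∑ _j ∈ N i, ((N i).card : ℝ)⁻¹ :=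
        sum_le_sum fun j hj =>
          inv_anti₀ hcard (by exact_mod_cast card_le_sup_card_of_mem (hN i j hj))
    _ = 1 := by rw [sum_const, nsmul_eq_mul, mul_inv_cancel₀ hcard.ne']

end NbhdWeight

section Barrier

variable {E : Type*} [AddCommGroup E] [Module ℝ E]

theorem convexOn_neg_inv_Iio : ConvexOn ℝ (Set.Iio 0) fun t : ℝ => -t⁻¹ := by
  have h := (convexOn_zpow (𝕜 := ℝ) (-1)).comp_linearMap (-LinearMap.id)
  have hset : (-LinearMap.id : ℝ →ₗ[ℝ] ℝ) ⁻¹' Set.Ioi 0 = Set.Iio 0 := by ext t; simp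
  rw [hset] at h
  exact h.congr fun t _ => by simp

/-- `t ↦ -t⁻¹` is convex and monotone on `(-∞, 0)`. -/
theorem ConvexOn.neg_inv {s : Set E} {g : E → ℝ} (hg : ConvexOn ℝ s g)
    (hneg : ∀ z ∈ s, g z < 0) : ConvexOn ℝ s fun z => -(g z)⁻¹ := by
  refine ⟨hg.1, fun X hX Y hY a b ha hb hab => ?_⟩
  have hcomb : g (a • X + b • Y) ≤ a • g X + b • g Y := hg.2 hX hY ha hb hab
  have hcomb_neg : a • g X + b • g Y < 0 :=
    convex_Iio (0 : ℝ) (hneg X hX) (hneg Y hY) ha hb hab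
  calc -(g (a • X + b • Y))⁻¹ ≤ -(a • g X + b • g Y)⁻¹ :=
        neg_le_neg ((inv_le_inv_of_neg hcomb_neg (hneg _ (hg.1 hX hY ha hb hab))).2 hcomb)
    _ ≤ a • -(g X)⁻¹ + b • -(g Y)⁻¹ :=
        convexOn_neg_inv_Iio.2 (hneg X hX) (hneg Y hY) ha hb hab

variable {ι : Type*} {g : ι → E → ℝ}

theorem convex_setOf_forall_neg (hg : ∀ j, ConvexOn ℝ Set.univ (g j)) :
    Convex ℝ {z | ∀ j, g j z < 0} := by
  rw [Set.ofPred_forall]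
  exact convex_iInter fun j => by simpa using (hg j).convex_lt 0

theorem convexOn_sum_neg_inv (t : Finset ι) (hg : ∀ j, ConvexOn ℝ Set.univ (g j)) :
    ConvexOn ℝ {z | ∀ j, g j z < 0} fun z => ∑ j ∈ t, -(g j z)⁻¹ := by
  have hS := convex_setOf_forall_neg hg
  have h := Finset.sum_induction (s := t) (fun j z => -(g j z)⁻¹)
    (ConvexOn ℝ {z | ∀ j, g j z < 0}) (fun _ _ => ConvexOn.add) (convexOn_const 0 hS)
    fun j _ => ((hg j).subset (Set.subset_univ _) hS).neg_inv fun z hz => hz j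
  exact h.congr fun z _ => Finset.sum_apply z t _

end Barrier

theorem convexOn_univ_of_subsingleton {E : Type*} [AddCommGroup E] [Module ℝ E]
    [Subsingleton E] (f : E → ℝ) : ConvexOn ℝ Set.univ f :=
  ⟨convex_univ, fun x _ y _ a b _ _ hab => by
    rw [Subsingleton.elim y x, Convex.combo_self hab, smul_eq_mul, smul_eq_mul, ← add_mul, hab,
      one_mul]⟩

theorem nonneg_of_norm_sub_le_mul_norm_sub {E F : Type*} [NormedAddCommGroup E] [Nontrivial E]
    [SeminormedAddCommGroup F] {u : E → F} {L : ℝ} (hu : ∀ z w, ‖u z - u w‖ ≤ L * ‖z - w‖) :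
    0 ≤ L := by
  obtain ⟨z, w, hzw⟩ := exists_pair_ne E
  exact nonneg_of_mul_nonneg_left ((norm_nonneg _).trans (hu z w))
    (norm_pos_iff.2 (sub_ne_zero.2 hzw))

section QuadSurrogate

variable {E : Type*} [NormedAddCommGroup E] [InnerProductSpace ℝ E]

theorem convexOn_quadratic (c : ℝ) (v a : E) {L : ℝ} (hL : 0 ≤ L) :
    ConvexOn ℝ Set.univ fun z => c + ⟪v, z - a⟫ + L / 2 * ‖z - a‖ ^ 2 := by
  have hlin : ConvexOn ℝ Set.univ fun z => c + ⟪v, z - a⟫ :=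
    (((innerₛₗ ℝ v).convexOn convex_univ).add_const (c - ⟪v, a⟫)).congr fun z _ => by
      simp [inner_sub_right]; ring
  have hsq : ConvexOn ℝ Set.univ fun z => ‖z - a‖ ^ 2 :=
    ((convexOn_dist a convex_univ).pow (fun _ _ => dist_nonneg) 2).congr fun z _ => by
      simp [dist_eq_norm]
  exact hlin.add (hsq.smul (by positivity : 0 ≤ L / 2))

variable [CompleteSpace E]

noncomputable def quadSurrogate (f : E → ℝ) (L : ℝ) (a z : E) : ℝ :=
  f a + ⟪gradient f a, z - a⟫ + L / 2 * ‖z - a‖ ^ 2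

theorem HasGradientAt.hasDerivAt_add_smul {f : E → ℝ} {a d : E} {t : ℝ} {f' : E}
    (hf : HasGradientAt f f' (a + t • d)) :
    HasDerivAt (fun s : ℝ => f (a + s • d)) ⟪f', d⟫ t := by
  have hline : HasDerivAt (fun s : ℝ => a + s • d) d t := by
    simpa using ((hasDerivAt_id t).smul_const d).const_add a
  simpa [Function.comp_def] using hf.hasFDerivAt.comp_hasDerivAt t hline

/-- The descent lemma. Along the segment from `a` to `z`, the gap between `f` and its
quadratic surrogate has derivative `L t ‖z - a‖² - ⟪∇f (a + t (z - a)) - ∇f a, z - a⟫ ≥ 0`. -/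
theorem le_quadSurrogate {f : E → ℝ} {L : ℝ} (hf : Differentiable ℝ f)
    (hL : ∀ z w, ‖gradient f z - gradient f w‖ ≤ L * ‖z - w‖) (a z : E) :
    f z ≤ quadSurrogate f L a z := by
  set d := z - a
  set φ : ℝ → ℝ := fun t => f (a + t • d) - t * ⟪gradient f a, d⟫ - L / 2 * t ^ 2 * ‖d‖ ^ 2
  have hφ : ∀ t, HasDerivAt φ
      (⟪gradient f (a + t • d) - gradient f a, d⟫ - L * t * ‖d‖ ^ 2) t := fun t => by
    have h := (((hf (a + t • d)).hasGradientAt.hasDerivAt_add_smul).sub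
      ((hasDerivAt_id t).mul_const ⟪gradient f a, d⟫)).sub
      (((hasDerivAt_pow 2 t).const_mul (L / 2)).mul_const (‖d‖ ^ 2))
    exact h.congr_deriv (by rw [inner_sub_left]; push_cast; ring)
  have hφ' : ∀ t ∈ interior (Set.Icc (0 : ℝ) 1),
      ⟪gradient f (a + t • d) - gradient f a, d⟫ - L * t * ‖d‖ ^ 2 ≤ 0 := fun t ht => by
    rw [interior_Icc] at ht
    have hlip := hL (a + t • d) a
    rw [add_sub_cancel_left, norm_smul, Real.norm_eq_abs, abs_of_pos ht.1] at hlip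
    have := real_inner_le_norm (gradient f (a + t • d) - gradient f a) d
    nlinarith [norm_nonneg d]
  have hanti : AntitoneOn φ (Set.Icc 0 1) :=
    antitoneOn_of_hasDerivWithinAt_nonpos (convex_Icc 0 1)
      (fun t _ => (hφ t).continuousAt.continuousWithinAt)
      (fun t _ => (hφ t).hasDerivWithinAt) hφ'
  have h10 := hanti (Set.left_mem_Icc.2 zero_le_one) (Set.right_mem_Icc.2 zero_le_one) zero_le_one
  simp only [φ, one_smul, zero_smul, add_zero, d, add_sub_cancel] at h10
  simp only [quadSurrogate]
  linarith

theorem convexOn_quadSurrogate {f : E → ℝ} {L : ℝ}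
    (hL : ∀ z w, ‖gradient f z - gradient f w‖ ≤ L * ‖z - w‖) (a : E) :
    ConvexOn ℝ Set.univ (quadSurrogate f L a) := by
  rcases subsingleton_or_nontrivial E with _ | _
  · exact convexOn_univ_of_subsingleton _
  · exact convexOn_quadratic _ _ _ (nonneg_of_norm_sub_le_mul_norm_sub hL)

end QuadSurrogate

theorem stmt_7_general
    (n m : ℕ) (d : Fin n → ℕ)
    (G : SimpleGraph (Fin n)) [DecidableRel G.Adj]
    -- local cost functions, `L i`-smooth
    (f : (i : Fin n) → EuclideanSpace ℝ (Fin (d i)) → ℝ)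
    (Lf : Fin n → ℝ)
    (hfdiff : ∀ i, Differentiable ℝ (f i))
    (hfsmooth : ∀ i, ∀ z w : EuclideanSpace ℝ (Fin (d i)),
      ‖gradient (f i) z - gradient (f i) w‖ ≤ Lf i * ‖z - w‖)
    -- local constraint functions, convex, β-smooth, β₁-Lipschitz on X i
    (q : Fin n → ℕ)
    (g : (i : Fin n) → Fin (q i) → EuclideanSpace ℝ (Fin (d i)) → ℝ)
    (hgconv : ∀ i j, ConvexOn ℝ Set.univ (g i j))
    -- coupling data and Slater point
    (A : (i : Fin n) → Matrix (Fin m) (Fin (d i)) ℝ) (c : Fin m → ℝ)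
    -- barrier parameter and barrier functions
    (ρ : ℝ) (hρ : 0 < ρ)
    (B : (i : Fin n) → EuclideanSpace ℝ (Fin (d i)) → ℝ)
    (hB : ∀ i z, B i z = ∑ j, -(g i j z)⁻¹)
    -- closed neighborhoods and step weights η
    (Nbar : Fin n → Finset (Fin n))
    (hNbar : ∀ i, Nbar i = insert i (G.neighborFinset i))
    (η : Fin n → ℝ)
    (hη : ∀ i, η i = (((Nbar i).sup (fun l => (Nbar l).card) : ℕ) : ℝ)⁻¹)
    -- DFM iterates, local search directions and quadratic surrogates
    (x : ℕ → (i : Fin n) → EuclideanSpace ℝ (Fin (d i)))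
    (p : ℕ → Fin n → (j : Fin n) → EuclideanSpace ℝ (Fin (d j)))
    (fsur : ℕ → (j : Fin n) → EuclideanSpace ℝ (Fin (d j)) → ℝ)
    (hfsur : ∀ k j z, fsur k j z =
      f j (x k j) + ⟪gradient (f j) (x k j), z - x k j⟫ + (Lf j / 2) * ‖z - x k j‖^2)
    -- x⁰ is feasible for the barrier problem (P_ρ)
    (hx0 : (∑ i, (A i).mulVec (x 0 i)) = c ∧ ∀ i j, g i j (x 0 i) < 0)
    -- (p k i ·) is a minimizer of the local subproblem of node i at iteration k
    (hpfeas : ∀ k i, (∑ j ∈ Nbar i, (A j).mulVec (p k i j)) = 0 ∧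
      ∀ j ∈ Nbar i, ∀ l, g j l (x k j + p k i j) < 0)
    (hpopt : ∀ k i, ∀ w : (j : Fin n) → EuclideanSpace ℝ (Fin (d j)),
      ((∑ j ∈ Nbar i, (A j).mulVec (w j)) = 0 ∧
        ∀ j ∈ Nbar i, ∀ l, g j l (x k j + w j) < 0) →
      (∑ j ∈ Nbar i, (fsur k j (x k j + p k i j) + ρ * B j (x k j + p k i j))) ≤
      (∑ j ∈ Nbar i, (fsur k j (x k j + w j) + ρ * B j (x k j + w j))))
    -- DFM update
    (hupd : ∀ k i, x (k+1) i = x k i + ∑ j ∈ Nbar i, η j • p k j i)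
    -- the barrier objective
    (F : ((i : Fin n) → EuclideanSpace ℝ (Fin (d i))) → ℝ)
    (hF : ∀ y, F y = ∑ i, (f i (y i) + ρ * B i (y i))) :
    (∀ k, F (x (k+1)) ≤ F (x k)) ∧ (∀ k, F (x k) ≤ F (x 0)) := by
  have hself : ∀ i, i ∈ Nbar i := fun i => hNbar i ▸ Finset.mem_insert_self _ _
  have hsymm : ∀ i j, j ∈ Nbar i → i ∈ Nbar j := fun i j hj => by
    rw [hNbar] at hj ⊢
    exact G.mem_insert_neighborFinset_comm hj
  obtain rfl : η = nbhdWeight Nbar := funext hη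
  have hη₀ : ∀ j, 0 ≤ nbhdWeight Nbar j := fun j => (nbhdWeight_pos hself j).le
  have hη₁ : ∀ i, ∑ j ∈ Nbar i, nbhdWeight Nbar j ≤ 1 := sum_nbhdWeight_le_one hself hsymm
  set S : ∀ i, Set (EuclideanSpace ℝ (Fin (d i))) := fun i => {z | ∀ l, g i l z < 0}
  have hS : ∀ i, Convex ℝ (S i) := fun i => convex_setOf_forall_neg (hgconv i)
  have hfeas : ∀ k i, x k i ∈ S i := by
    intro k
    induction k with
    | zero => exact hx0.2
    | succ k ih =>
      intro i
      rw [hupd]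
      exact (hS i).add_sum_smul_mem (fun j _ => hη₀ j) (hη₁ i) (ih i)
        fun j hj => (hpfeas k j).2 i (hsymm i j hj)
  have hφ : ∀ k i, ConvexOn ℝ (S i) fun z => fsur k i z + ρ * B i z := fun k i => by
    rw [show fsur k i = quadSurrogate (f i) (Lf i) (x k i) from funext (hfsur k i)]
    simp only [hB]
    exact ((convexOn_quadSurrogate (hfsmooth i) _).subset (Set.subset_univ _) (hS i)).add
      ((convexOn_sum_neg_inv _ (hgconv i)).smul hρ.le)
  have hstep : ∀ k, F (x (k + 1)) ≤ F (x k) := fun k => by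
    calc F (x (k + 1)) ≤ ∑ i, (fsur k i (x (k + 1) i) + ρ * B i (x (k + 1) i)) := by
          rw [hF]
          gcongr with i
          rw [hfsur]
          exact le_quadSurrogate (hfdiff i) (hfsmooth i) _ _
      _ ≤ ∑ i, (fsur k i (x k i) + ρ * B i (x k i)) := by
          simp only [hupd]
          refine sum_map_add_sum_smul_le (hφ k) hsymm hη₀ hη₁ (hfeas k)
            (fun j i hi => (hpfeas k j).2 i hi) fun j => ?_
          simpa using hpopt k j 0 ⟨by simp, fun i _ l => by simpa using hfeas k i l⟩
      _ = F (x k) := by simp [hF, hfsur]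
  exact ⟨hstep, fun k => antitone_nat_of_succ_le (f := fun k => F (x k)) hstep k.zero_le⟩

/-- descent of the barrier objective: along the DFM iterates the
barrier objective `F` is monotonically non-increasing, `F (x (k+1)) ≤ F (x k)`
for all `k`, and consequently `F (x k) ≤ F (x 0)` for all `k`. -/
theorem stmt_7
    (n m : ℕ) (hn : 0 < n) (d : Fin n → ℕ)
    (G : SimpleGraph (Fin n)) [DecidableRel G.Adj]
    -- local cost functions, `L i`-smooth
    (f : (i : Fin n) → EuclideanSpace ℝ (Fin (d i)) → ℝ)
    (Lf : Fin n → ℝ)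
    (hfdiff : ∀ i, Differentiable ℝ (f i))
    (hfsmooth : ∀ i, ∀ z w : EuclideanSpace ℝ (Fin (d i)),
      ‖gradient (f i) z - gradient (f i) w‖ ≤ Lf i * ‖z - w‖)
    -- local constraint functions, convex, β-smooth, β₁-Lipschitz on X i
    (q : Fin n → ℕ)
    (g : (i : Fin n) → Fin (q i) → EuclideanSpace ℝ (Fin (d i)) → ℝ)
    (β β₁ : ℝ)
    (hgconv : ∀ i j, ConvexOn ℝ Set.univ (g i j))
    (hgdiff : ∀ i j, Differentiable ℝ (g i j))
    (hgsmooth : ∀ i j, ∀ z w : EuclideanSpace ℝ (Fin (d i)),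
      ‖gradient (g i j) z - gradient (g i j) w‖ ≤ β * ‖z - w‖)
    (hglip : ∀ i j, ∀ z w : EuclideanSpace ℝ (Fin (d i)),
      (∀ l, g i l z ≤ 0) → (∀ l, g i l w ≤ 0) → |g i j z - g i j w| ≤ β₁ * ‖z - w‖)
    -- coupling data and Slater point
    (A : (i : Fin n) → Matrix (Fin m) (Fin (d i)) ℝ) (c : Fin m → ℝ)
    (hslater : ∃ xt : (i : Fin n) → EuclideanSpace ℝ (Fin (d i)),
      (∑ i, (A i).mulVec (xt i)) = c ∧ ∀ i j, g i j (xt i) < 0)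
    -- barrier parameter and barrier functions
    (ρ : ℝ) (hρ : 0 < ρ)
    (B : (i : Fin n) → EuclideanSpace ℝ (Fin (d i)) → ℝ)
    (hB : ∀ i z, B i z = ∑ j, -(g i j z)⁻¹)
    -- closed neighborhoods and step weights η
    (Nbar : Fin n → Finset (Fin n))
    (hNbar : ∀ i, Nbar i = insert i (G.neighborFinset i))
    (η : Fin n → ℝ)
    (hη : ∀ i, η i = (((Nbar i).sup (fun l => (Nbar l).card) : ℕ) : ℝ)⁻¹)
    -- DFM iterates, local search directions and quadratic surrogates
    (x : ℕ → (i : Fin n) → EuclideanSpace ℝ (Fin (d i)))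
    (p : ℕ → Fin n → (j : Fin n) → EuclideanSpace ℝ (Fin (d j)))
    (fsur : ℕ → (j : Fin n) → EuclideanSpace ℝ (Fin (d j)) → ℝ)
    (hfsur : ∀ k j z, fsur k j z =
      f j (x k j) + ⟪gradient (f j) (x k j), z - x k j⟫ + (Lf j / 2) * ‖z - x k j‖^2)
    -- x⁰ is feasible for the barrier problem (P_ρ)
    (hx0 : (∑ i, (A i).mulVec (x 0 i)) = c ∧ ∀ i j, g i j (x 0 i) < 0)
    -- (p k i ·) is a minimizer of the local subproblem of node i at iteration k
    (hpfeas : ∀ k i, (∑ j ∈ Nbar i, (A j).mulVec (p k i j)) = 0 ∧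
      ∀ j ∈ Nbar i, ∀ l, g j l (x k j + p k i j) < 0)
    (hpopt : ∀ k i, ∀ w : (j : Fin n) → EuclideanSpace ℝ (Fin (d j)),
      ((∑ j ∈ Nbar i, (A j).mulVec (w j)) = 0 ∧
        ∀ j ∈ Nbar i, ∀ l, g j l (x k j + w j) < 0) →
      (∑ j ∈ Nbar i, (fsur k j (x k j + p k i j) + ρ * B j (x k j + p k i j))) ≤
      (∑ j ∈ Nbar i, (fsur k j (x k j + w j) + ρ * B j (x k j + w j))))
    -- DFM update
    (hupd : ∀ k i, x (k+1) i = x k i + ∑ j ∈ Nbar i, η j • p k j i)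
    -- the barrier objective
    (F : ((i : Fin n) → EuclideanSpace ℝ (Fin (d i))) → ℝ)
    (hF : ∀ y, F y = ∑ i, (f i (y i) + ρ * B i (y i))) :
    (∀ k, F (x (k+1)) ≤ F (x k)) ∧ (∀ k, F (x k) ≤ F (x 0)) :=
  stmt_7_general n m d G f Lf hfdiff hfsmooth q g hgconv A c ρ hρ B hB Nbar hNbar η hη x p fsur
    hfsur hx0 hpfeas hpopt hupd F hF
end

section
/- Let g : ℝ^d → ℝ be convex and β-smooth with g(x) < 0 and g(y) < 0, and set ḡ := max(|g(x)|, |g(y)|) and Δ := 1/g(x) − 1/g(y) − ⟨∇g(x), y − x⟩/g(x)². Then Δ ≥ ‖∇g(x) − ∇g(y)‖² / (2βḡ²). -/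
/-!
Write `D := g y - g x - ⟪∇g x, y - x⟫` for the Bregman divergence of `g`. Clearing denominators,
`Δ = D / g(x)² + (g x - g y)² / (g(x)² · (-g y))`, so `Δ ≥ D / g(x)²` as soon as `g y < 0`.
For convex `β`-smooth `g` one has `D ≥ ‖∇g x - ∇g y‖² / (2β)`: compare the first-order lower
bound at `x` with the descent-lemma upper bound at `y`, both evaluated at the gradient step
`y - β⁻¹ (∇g y - ∇g x)`. Finally `g(x)² ≤ ḡ²`.
-/

open RealInnerProductSpace Set

lemma le_add_deriv_add_half_of_deriv_sub_le {φ φ' : ℝ → ℝ} {C : ℝ}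
    (hφ : ∀ t, HasDerivAt φ (φ' t) t) (hC : ∀ t, 0 < t → φ' t - φ' 0 ≤ C * t) :
    φ 1 ≤ φ 0 + φ' 0 + C / 2 := by
  let ψ t := φ t - φ' 0 * t - C / 2 * t ^ 2
  have hψ : ∀ t, HasDerivAt ψ (φ' t - φ' 0 - C * t) t := fun t => by
    refine (((hφ t).sub ((hasDerivAt_id t).const_mul (φ' 0))).sub
      ((hasDerivAt_pow 2 t).const_mul (C / 2))).congr_deriv ?_
    simp only [mul_one, Nat.cast_ofNat]
    ring
  have hanti : AntitoneOn ψ (Ici 0) := by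
    refine antitoneOn_of_hasDerivWithinAt_nonpos (convex_Ici 0)
      (fun t _ => (hψ t).continuousAt.continuousWithinAt) (fun t _ => (hψ t).hasDerivWithinAt) ?_
    rw [interior_Ici]
    exact fun t ht => by linarith [hC t ht]
  have hψ01 := hanti (mem_Ici.2 le_rfl) (mem_Ici.2 zero_le_one) zero_le_one
  simp only [ψ] at hψ01
  linarith

variable {E : Type*} [NormedAddCommGroup E] [InnerProductSpace ℝ E] [CompleteSpace E]

lemma hasDerivAt_comp_lineMap {g : E → ℝ} {a b : E} {t : ℝ}
    (hg : DifferentiableAt ℝ g (AffineMap.lineMap a b t)) :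
    HasDerivAt (fun s => g (AffineMap.lineMap a b s))
      ⟪gradient g (AffineMap.lineMap a b t), b - a⟫ t :=
  hg.hasGradientAt.hasFDerivAt.comp_hasDerivAt t AffineMap.hasDerivAt_lineMap

lemma le_add_inner_gradient_add_sq {g : E → ℝ} (hdiff : Differentiable ℝ g) {β : ℝ}
    (hsmooth : ∀ z w, ‖gradient g z - gradient g w‖ ≤ β * ‖z - w‖) (a b : E) :
    g b ≤ g a + ⟪gradient g a, b - a⟫ + β / 2 * ‖b - a‖ ^ 2 := by
  let l : ℝ → E := AffineMap.lineMap a b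
  have hl : ∀ t, l t - a = t • (b - a) := AffineMap.lineMap_vsub_left a b
  have hgrowth : ∀ t : ℝ, 0 < t →
      ⟪gradient g (l t), b - a⟫ - ⟪gradient g (l 0), b - a⟫ ≤ β * ‖b - a‖ ^ 2 * t := by
    intro t ht
    rw [← inner_sub_left]
    calc _ ≤ ‖gradient g (l t) - gradient g (l 0)‖ * ‖b - a‖ := real_inner_le_norm _ _
      _ ≤ β * ‖l t - l 0‖ * ‖b - a‖ := by gcongr; exact hsmooth _ _
      _ = β * ‖b - a‖ ^ 2 * t := by
          rw [show l 0 = a from AffineMap.lineMap_apply_zero a b, hl, norm_smul,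
            Real.norm_of_nonneg ht.le]
          ring
  have key := le_add_deriv_add_half_of_deriv_sub_le
    (fun t => hasDerivAt_comp_lineMap (a := a) (b := b) (hdiff _)) hgrowth
  simp only [AffineMap.lineMap_apply_zero, AffineMap.lineMap_apply_one] at key
  linarith

lemma ConvexOn.add_inner_gradient_le {g : E → ℝ} (hconv : ConvexOn ℝ univ g)
    (hdiff : Differentiable ℝ g) (a b : E) :
    g a + ⟪gradient g a, b - a⟫ ≤ g b := by
  have hline : ConvexOn ℝ univ (fun s : ℝ => g (AffineMap.lineMap a b s)) :=
    hconv.comp_affineMap (AffineMap.lineMap a b)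
  have := hline.le_slope_of_hasDerivAt (mem_univ 0) (mem_univ 1) zero_lt_one
    (hasDerivAt_comp_lineMap (hdiff _))
  simp only [AffineMap.lineMap_apply_zero, AffineMap.lineMap_apply_one, slope_def_field,
    sub_zero, div_one] at this
  linarith

lemma ConvexOn.sq_norm_gradient_sub_div_le {g : E → ℝ} (hconv : ConvexOn ℝ univ g)
    (hdiff : Differentiable ℝ g) {β : ℝ} (hβ : 0 < β)
    (hsmooth : ∀ z w, ‖gradient g z - gradient g w‖ ≤ β * ‖z - w‖) (x y : E) :
    ‖gradient g x - gradient g y‖ ^ 2 / (2 * β) ≤ g y - g x - ⟪gradient g x, y - x⟫ := by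
  set v := gradient g y - gradient g x
  set w := y - β⁻¹ • v
  have hlow := hconv.add_inner_gradient_le hdiff x w
  have hup := le_add_inner_gradient_add_sq hdiff hsmooth y w
  have hv : ⟪gradient g y, v⟫ - ⟪gradient g x, v⟫ = ‖v‖ ^ 2 := by
    rw [← inner_sub_left, real_inner_self_eq_norm_sq]
  rw [show w - x = (y - x) - β⁻¹ • v by simp only [w]; abel, inner_sub_right,
    real_inner_smul_right] at hlow
  rw [show w - y = -(β⁻¹ • v) by simp only [w]; abel, inner_neg_right, real_inner_smul_right,
    norm_neg, norm_smul, Real.norm_of_nonneg (inv_nonneg.2 hβ.le)] at hup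
  rw [norm_sub_rev, show ‖v‖ ^ 2 / (2 * β) = β⁻¹ * ‖v‖ ^ 2 - β / 2 * (β⁻¹ * ‖v‖) ^ 2 by
    field_simp; ring]
  linear_combination hlow + hup - β⁻¹ * hv

lemma div_sq_le_one_div_sub_one_div_sub_div_sq {a b c : ℝ} (ha : a ≠ 0) (hb : b < 0) :
    (b - a - c) / a ^ 2 ≤ 1 / a - 1 / b - c / a ^ 2 := by
  have hsplit : 1 / a - 1 / b - c / a ^ 2 = (b - a - c) / a ^ 2 + (a - b) ^ 2 / (a ^ 2 * -b) := by
    field_simp [hb.ne]; ring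
  have : 0 ≤ (a - b) ^ 2 / (a ^ 2 * -b) := div_nonneg (sq_nonneg _) (by nlinarith [sq_nonneg a])
  linarith

/-- lower bound on the Bregman residual of the inverse barrier
via gradient differences of `g`.  For `g` convex and `β`-smooth with
`g x < 0`, `g y < 0`, `ḡ = max(|g x|, |g y|)` and
`Δ = 1/g(x) − 1/g(y) − ⟪∇g x, y − x⟫ / g(x)²`, one has
`Δ ≥ ‖∇g x − ∇g y‖² / (2 β ḡ²)`. -/
theorem stmt_14 (dd : ℕ) (g : EuclideanSpace ℝ (Fin dd) → ℝ)
    (hconv : ConvexOn ℝ Set.univ g) (hdiff : Differentiable ℝ g)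
    (β : ℝ)
    (hsmooth : ∀ z w : EuclideanSpace ℝ (Fin dd),
      ‖gradient g z - gradient g w‖ ≤ β * ‖z - w‖)
    (x y : EuclideanSpace ℝ (Fin dd)) (hx : g x < 0) (hy : g y < 0)
    (gbar Δ : ℝ)
    (hgbar : gbar = max |g x| |g y|)
    (hΔ : Δ = 1 / g x - 1 / g y - ⟪gradient g x, y - x⟫ / (g x)^2) :
    ‖gradient g x - gradient g y‖^2 / (2 * β * gbar^2) ≤ Δ := by
  have hΔD : (g y - g x - ⟪gradient g x, y - x⟫) / g x ^ 2 ≤ Δ :=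
    hΔ ▸ div_sq_le_one_div_sub_one_div_sub_div_sq hx.ne hy
  rcases le_or_gt β 0 with hβ | hβ
  · have hD : 0 ≤ g y - g x - ⟪gradient g x, y - x⟫ := by
      linarith [hconv.add_inner_gradient_le hdiff x y]
    calc ‖gradient g x - gradient g y‖ ^ 2 / (2 * β * gbar ^ 2) ≤ 0 :=
          div_nonpos_of_nonneg_of_nonpos (sq_nonneg _) (by nlinarith [sq_nonneg gbar])
      _ ≤ (g y - g x - ⟪gradient g x, y - x⟫) / g x ^ 2 := by positivity
      _ ≤ Δ := hΔD
  · have hgx : g x ^ 2 ≤ gbar ^ 2 := by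
      rw [hgbar, ← sq_abs (g x)]
      exact pow_le_pow_left₀ (abs_nonneg _) (le_max_left _ _) 2
    calc ‖gradient g x - gradient g y‖ ^ 2 / (2 * β * gbar ^ 2)
        = ‖gradient g x - gradient g y‖ ^ 2 / (2 * β) / gbar ^ 2 := by rw [div_div]
      _ ≤ ‖gradient g x - gradient g y‖ ^ 2 / (2 * β) / g x ^ 2 :=
          div_le_div_of_nonneg_left (by positivity) (sq_pos_of_neg hx) hgx
      _ ≤ (g y - g x - ⟪gradient g x, y - x⟫) / g x ^ 2 :=
          div_le_div_of_nonneg_right (hconv.sq_norm_gradient_sub_div_le hdiff hβ hsmooth x y)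
            (sq_nonneg _)
      _ ≤ Δ := hΔD
end

section
/- Let g^1,…,g^q : ℝ^d → ℝ be convex, β-smooth functions that are β₁-Lipschitz continuous on their common sublevel set {z : g^j(z) ≤ 0 ∀j}, and define B(z) := ∑_{j=1}^q −1/g^j(z). Let M > 0 and let x, y ∈ ℝ^d satisfy g^j(x) < 0, g^j(y) < 0, −1/g^j(x) ≤ M, and −1/g^j(y) ≤ M for every j. Then B(y) − B(x) − ⟨∇B(x), y − x⟩ ≥ ‖∇B(y) − ∇B(x)‖² / ((8β₁²M³ + 4βM²) q). -/
open RealInnerProductSpace Topology Finset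

/-!
Write `φⱼ = -1/gⱼ`, `σ = φⱼ x`, `τ = φⱼ y`. Then `∇φⱼ = φⱼ² ∇gⱼ`, and the Bregman divergence of
`φⱼ` splits as `(τ - σ)²/τ + σ² D_{gⱼ}(x, y)`. In the gradient difference
`τ² ∇gⱼ y - σ² ∇gⱼ x = σ² (∇gⱼ y - ∇gⱼ x) + (τ² - σ²) ∇gⱼ y` the first term is controlled by the
cocoercivity `‖∇gⱼ y - ∇gⱼ x‖² ≤ 2β D_{gⱼ}(x, y)` of the convex `β`-smooth `gⱼ`, the second by
`‖∇gⱼ y‖ ≤ β₁` and `(τ + σ)² τ ≤ 4M³`. Summing over `j`, Cauchy–Schwarz costs the factor `q`.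
-/

noncomputable def bregmanDiv {E : Type*} [NormedAddCommGroup E] [InnerProductSpace ℝ E]
    [CompleteSpace E] (f : E → ℝ) (x y : E) : ℝ :=
  f y - f x - ⟪gradient f x, y - x⟫

lemma sq_norm_sq_smul_sub_sq_smul_le {E : Type*} [SeminormedAddCommGroup E] [NormedSpace ℝ E]
    {σ τ M β β₁ e : ℝ} {u v : E} (hσ : 0 < σ) (hτ : 0 < τ)
    (hσM : σ ≤ M) (hτM : τ ≤ M) (hβ : 0 ≤ β) (he : 0 ≤ e) (hv : ‖v‖ ≤ β₁)
    (huv : ‖v - u‖ ^ 2 ≤ 2 * β * e) :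
    ‖τ ^ 2 • v - σ ^ 2 • u‖ ^ 2 ≤
      (8 * β₁ ^ 2 * M ^ 3 + 4 * β * M ^ 2) * ((τ - σ) ^ 2 / τ + σ ^ 2 * e) := by
  have hM : 0 ≤ M := hσ.le.trans hσM
  have hsplit : τ ^ 2 • v - σ ^ 2 • u = σ ^ 2 • (v - u) + (τ ^ 2 - σ ^ 2) • v := by
    rw [smul_sub, sub_smul]; abel
  have hnorm : ‖τ ^ 2 • v - σ ^ 2 • u‖ ≤ σ ^ 2 * ‖v - u‖ + |τ ^ 2 - σ ^ 2| * β₁ := by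
    rw [hsplit]
    refine (norm_add_le _ _).trans ?_
    rw [norm_smul, norm_smul, Real.norm_of_nonneg (by positivity), Real.norm_eq_abs]
    gcongr
  have hfirst : 2 * (σ ^ 2 * ‖v - u‖) ^ 2 ≤ 4 * β * M ^ 2 * (σ ^ 2 * e) := by
    have : σ ^ 2 ≤ M ^ 2 := by gcongr
    calc 2 * (σ ^ 2 * ‖v - u‖) ^ 2 = 2 * σ ^ 2 * σ ^ 2 * ‖v - u‖ ^ 2 := by ring
      _ ≤ 2 * M ^ 2 * σ ^ 2 * (2 * β * e) := by gcongr
      _ = _ := by ring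
  have hsecond : 2 * (|τ ^ 2 - σ ^ 2| * β₁) ^ 2 ≤ 8 * β₁ ^ 2 * M ^ 3 * ((τ - σ) ^ 2 / τ) := by
    have hcube : (τ + σ) ^ 2 ≤ 4 * M ^ 3 / τ := by
      rw [le_div_iff₀ hτ]
      calc (τ + σ) ^ 2 * τ ≤ (M + M) ^ 2 * M := by gcongr
        _ = 4 * M ^ 3 := by ring
    calc 2 * (|τ ^ 2 - σ ^ 2| * β₁) ^ 2 = 2 * β₁ ^ 2 * (τ - σ) ^ 2 * (τ + σ) ^ 2 := by
          rw [mul_pow, sq_abs]; ring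
      _ ≤ 2 * β₁ ^ 2 * (τ - σ) ^ 2 * (4 * M ^ 3 / τ) := by gcongr
      _ = _ := by ring
  have hT : 0 ≤ (τ - σ) ^ 2 / τ := by positivity
  calc ‖τ ^ 2 • v - σ ^ 2 • u‖ ^ 2
      ≤ (σ ^ 2 * ‖v - u‖ + |τ ^ 2 - σ ^ 2| * β₁) ^ 2 := by gcongr
    _ ≤ 2 * ((σ ^ 2 * ‖v - u‖) ^ 2 + (|τ ^ 2 - σ ^ 2| * β₁) ^ 2) := add_sq_le
    _ ≤ _ := by
      have : 0 ≤ 8 * β₁ ^ 2 * M ^ 3 * (σ ^ 2 * e) := by positivity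
      have : 0 ≤ 4 * β * M ^ 2 * ((τ - σ) ^ 2 / τ) := by positivity
      linarith

lemma sq_norm_sum_div_le_sum {E ι : Type*} [SeminormedAddCommGroup E] (s : Finset ι) (h : ι → E)
    (D : ι → ℝ) (C : ℝ) (hD : ∀ i ∈ s, 0 ≤ D i) (hh : ∀ i ∈ s, ‖h i‖ ^ 2 ≤ C * D i) :
    ‖∑ i ∈ s, h i‖ ^ 2 / (C * #s) ≤ ∑ i ∈ s, D i := by
  rcases le_or_gt (C * #s) 0 with hC | hC
  · exact (div_nonpos_of_nonneg_of_nonpos (sq_nonneg _) hC).trans (sum_nonneg hD)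
  rw [div_le_iff₀ hC]
  calc ‖∑ i ∈ s, h i‖ ^ 2 ≤ (∑ i ∈ s, ‖h i‖) ^ 2 := by gcongr; exact norm_sum_le _ _
    _ ≤ #s * ∑ i ∈ s, ‖h i‖ ^ 2 := sq_sum_le_card_mul_sum_sq
    _ ≤ #s * ∑ i ∈ s, C * D i := by gcongr with i hi; exact hh i hi
    _ = (∑ i ∈ s, D i) * (C * #s) := by rw [← mul_sum]; ring

section Gradient

variable {E : Type*} [NormedAddCommGroup E] [InnerProductSpace ℝ E] [CompleteSpace E]
  {f : E → ℝ}

lemma hasDerivAt_comp_add_smul (hf : Differentiable ℝ f) (z d : E) (t : ℝ) :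
    HasDerivAt (fun s : ℝ => f (z + s • d)) ⟪gradient f (z + t • d), d⟫ t := by
  have hline : HasDerivAt (fun s : ℝ => z + s • d) d t := by
    simpa using ((hasDerivAt_id t).smul_const d).const_add z
  have := (hf (z + t • d)).hasFDerivAt.comp_hasDerivAt t hline
  rwa [← inner_gradient_left] at this

lemma ConvexOn.bregmanDiv_nonneg (hc : ConvexOn ℝ Set.univ f) (hf : Differentiable ℝ f)
    (x y : E) : 0 ≤ bregmanDiv f x y := by
  have hline : ConvexOn ℝ Set.univ (fun s : ℝ => f (x + s • (y - x))) := by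
    simpa [Function.comp_def, AffineMap.lineMap_apply_module', add_comm] using
      hc.comp_affineMap (AffineMap.lineMap x y)
  have hslope := hline.le_slope_of_hasDerivAt (Set.mem_univ 0) (Set.mem_univ 1) one_pos
    (by simpa only [zero_smul, add_zero] using hasDerivAt_comp_add_smul hf x (y - x) 0)
  simp only [slope_def_field, one_smul, add_sub_cancel, zero_smul, add_zero, sub_zero,
    div_one] at hslope
  exact sub_nonneg.2 hslope

lemma bregmanDiv_le_of_lipschitz_gradient (hf : Differentiable ℝ f) {β : ℝ}
    (hs : ∀ z w, ‖gradient f z - gradient f w‖ ≤ β * ‖z - w‖) (x y : E) :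
    bregmanDiv f x y ≤ β / 2 * ‖y - x‖ ^ 2 := by
  set d := y - x
  let φ : ℝ → ℝ := fun t => f (x + t • d) - t * ⟪gradient f x, d⟫ - t ^ 2 * (β / 2 * ‖d‖ ^ 2)
  have hφ : ∀ t, HasDerivAt φ
      (⟪gradient f (x + t • d) - gradient f x, d⟫ - t * (β * ‖d‖ ^ 2)) t := by
    intro t
    refine (((hasDerivAt_comp_add_smul hf x d t).sub
      ((hasDerivAt_id t).mul_const ⟪gradient f x, d⟫)).sub
      ((hasDerivAt_pow 2 t).mul_const (β / 2 * ‖d‖ ^ 2))).congr_deriv ?_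
    rw [inner_sub_left]
    ring
  have hφ' : ∀ t, 0 ≤ t → ⟪gradient f (x + t • d) - gradient f x, d⟫ ≤ t * (β * ‖d‖ ^ 2) := by
    intro t ht
    calc _ ≤ ‖gradient f (x + t • d) - gradient f x‖ * ‖d‖ := real_inner_le_norm _ _
      _ ≤ β * ‖t • d‖ * ‖d‖ := by gcongr; simpa using hs (x + t • d) x
      _ = t * (β * ‖d‖ ^ 2) := by rw [norm_smul, Real.norm_of_nonneg ht]; ring
  have hanti : AntitoneOn φ (Set.Ici 0) :=
    antitoneOn_of_hasDerivWithinAt_nonpos (convex_Ici 0)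
      (fun t _ => (hφ t).continuousAt.continuousWithinAt) (fun t _ => (hφ t).hasDerivWithinAt)
      (fun t ht => sub_nonpos.2 (hφ' t (interior_subset ht)))
  have h10 : φ 1 ≤ φ 0 := hanti Set.self_mem_Ici (Set.mem_Ici.2 zero_le_one) zero_le_one
  simp only [φ, d, add_sub_cancel, one_smul, zero_smul, add_zero, one_mul, one_pow, zero_mul, sub_zero, ne_eq,
    OfNat.ofNat_ne_zero, not_false_eq_true, zero_pow] at h10
  rw [bregmanDiv]
  linarith

lemma ConvexOn.sq_norm_gradient_sub_le (hc : ConvexOn ℝ Set.univ f) (hf : Differentiable ℝ f)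
    {β : ℝ} (hβ : 0 ≤ β) (hs : ∀ z w, ‖gradient f z - gradient f w‖ ≤ β * ‖z - w‖) (x y : E) :
    ‖gradient f y - gradient f x‖ ^ 2 ≤ 2 * β * bregmanDiv f x y := by
  set h := gradient f y - gradient f x
  rcases hβ.eq_or_lt with rfl | hβ
  · have : h = 0 := norm_le_zero_iff.1 (by simpa using hs y x)
    simp [this]
  -- Compare `f` at `y' = y - β⁻¹ • h` from below (convexity at `x`) and above (smoothness at `y`).
  set y' := y - β⁻¹ • h
  have hlow := hc.bregmanDiv_nonneg hf x y'
  have hup := bregmanDiv_le_of_lipschitz_gradient hf hs y y'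
  have hh : ⟪gradient f y, h⟫ - ⟪gradient f x, h⟫ = ‖h‖ ^ 2 := by
    rw [← inner_sub_left, real_inner_self_eq_norm_sq]
  have hy'x : y' - x = (y - x) - β⁻¹ • h := by simp only [y']; abel
  have hy'y : y' - y = -(β⁻¹ • h) := by simp only [y']; abel
  simp only [bregmanDiv, hy'x, hy'y, inner_sub_right, inner_neg_right, real_inner_smul_right,
    norm_neg, norm_smul, Real.norm_of_nonneg (inv_nonneg.2 hβ.le)] at hlow hup ⊢
  have hdiv : ‖h‖ ^ 2 / (2 * β) =
      β⁻¹ * (⟪gradient f y, h⟫ - ⟪gradient f x, h⟫) - β / 2 * (β⁻¹ * ‖h‖) ^ 2 := by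
    rw [hh]; field_simp; ring
  rw [← div_le_iff₀' (by positivity), hdiv]
  linarith

lemma norm_gradient_le_of_eventually_lipschitz {z : E} (hf : DifferentiableAt ℝ f z) {C : ℝ}
    (hC : 0 ≤ C) (hlip : ∀ᶠ w in 𝓝 z, |f w - f z| ≤ C * ‖w - z‖) : ‖gradient f z‖ ≤ C := by
  rw [← (InnerProductSpace.toDual ℝ E).norm_map, toDual_gradient]
  exact hf.hasFDerivAt.le_of_lip' hC hlip

lemma gradient_neg_inv {g : E → ℝ} {z : E} (hg : DifferentiableAt ℝ g z) (hz : g z ≠ 0) :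
    gradient (fun w => -(g w)⁻¹) z = (-(g z)⁻¹) ^ 2 • gradient g z := by
  apply HasGradientAt.gradient
  rw [hasGradientAt_iff_hasFDerivAt]
  refine ((hasDerivAt_inv hz).comp_hasFDerivAt z hg.hasFDerivAt).neg.congr_fderiv ?_
  ext w
  simp [toDual_gradient]

lemma gradient_fun_sum {ι : Type*} (s : Finset ι) {φ : ι → E → ℝ} {z : E}
    (h : ∀ i ∈ s, DifferentiableAt ℝ (φ i) z) :
    gradient (fun w => ∑ i ∈ s, φ i w) z = ∑ i ∈ s, gradient (φ i) z := by
  apply HasGradientAt.gradient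
  rw [hasGradientAt_iff_hasFDerivAt, map_sum]
  exact HasFDerivAt.fun_sum fun i hi => (h i hi).hasGradientAt.hasFDerivAt

lemma bregmanDiv_fun_sum {ι : Type*} (s : Finset ι) {φ : ι → E → ℝ} {x : E}
    (h : ∀ i ∈ s, DifferentiableAt ℝ (φ i) x) (y : E) :
    bregmanDiv (fun w => ∑ i ∈ s, φ i w) x y = ∑ i ∈ s, bregmanDiv (φ i) x y := by
  simp only [bregmanDiv, gradient_fun_sum s h, sum_inner, Finset.sum_sub_distrib]

lemma bregmanDiv_neg_inv {g : E → ℝ} {x y : E} (hg : DifferentiableAt ℝ g x) (hx : g x ≠ 0)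
    (hy : g y ≠ 0) :
    bregmanDiv (fun w => -(g w)⁻¹) x y =
      (-(g y)⁻¹ - -(g x)⁻¹) ^ 2 / -(g y)⁻¹ + (-(g x)⁻¹) ^ 2 * bregmanDiv g x y := by
  rw [bregmanDiv, bregmanDiv, gradient_neg_inv hg hx, real_inner_smul_left]
  field_simp
  ring

lemma ConvexOn.bregmanDiv_neg_inv_nonneg {g : E → ℝ} (hc : ConvexOn ℝ Set.univ g)
    (hg : Differentiable ℝ g) {x y : E} (hx : g x < 0) (hy : g y < 0) :
    0 ≤ bregmanDiv (fun w => -(g w)⁻¹) x y := by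
  rw [bregmanDiv_neg_inv (hg x) hx.ne hy.ne]
  have : 0 < -(g y)⁻¹ := by simpa using hy
  have := hc.bregmanDiv_nonneg hg x y
  positivity

lemma norm_gradient_le_of_lipschitzOn_feasible {ι : Type*} [Finite ι] {g : ι → E → ℝ}
    (hg : ∀ i, Differentiable ℝ (g i)) {β₁ : ℝ} (hβ₁ : 0 ≤ β₁)
    (hlip : ∀ i z w, (∀ l, g l z ≤ 0) → (∀ l, g l w ≤ 0) → |g i z - g i w| ≤ β₁ * ‖z - w‖)
    {z : E} (hz : ∀ l, g l z < 0) (i : ι) : ‖gradient (g i) z‖ ≤ β₁ := by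
  have hfeas : ∀ᶠ w in 𝓝 z, ∀ l, g l w < 0 := Filter.eventually_all.2 fun l =>
    (hg l).continuous.continuousAt.eventually_lt continuousAt_const (hz l)
  exact norm_gradient_le_of_eventually_lipschitz (hg i z) hβ₁
    (hfeas.mono fun w hw => hlip i w z (fun l => (hw l).le) (fun l => (hz l).le))

lemma ConvexOn.sq_norm_gradient_neg_inv_sub_le {g : E → ℝ} (hc : ConvexOn ℝ Set.univ g)
    (hg : Differentiable ℝ g) {β β₁ M : ℝ} (hβ : 0 ≤ β)
    (hs : ∀ z w, ‖gradient g z - gradient g w‖ ≤ β * ‖z - w‖) {x y : E} (hx : g x < 0)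
    (hy : g y < 0) (hMx : -(g x)⁻¹ ≤ M) (hMy : -(g y)⁻¹ ≤ M) (hgy : ‖gradient g y‖ ≤ β₁) :
    ‖gradient (fun w => -(g w)⁻¹) y - gradient (fun w => -(g w)⁻¹) x‖ ^ 2 ≤
      (8 * β₁ ^ 2 * M ^ 3 + 4 * β * M ^ 2) * bregmanDiv (fun w => -(g w)⁻¹) x y := by
  rw [gradient_neg_inv (hg y) hy.ne, gradient_neg_inv (hg x) hx.ne,
    bregmanDiv_neg_inv (hg x) hx.ne hy.ne]
  exact sq_norm_sq_smul_sub_sq_smul_le (by simpa) (by simpa) hMx hMy hβ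
    (hc.bregmanDiv_nonneg hg x y) hgy (hc.sq_norm_gradient_sub_le hg hβ hs x y)

end Gradient

theorem stmt_16_general (dd qq : ℕ) (g : Fin qq → EuclideanSpace ℝ (Fin dd) → ℝ)
    (hconv : ∀ j, ConvexOn ℝ Set.univ (g j))
    (hdiff : ∀ j, Differentiable ℝ (g j))
    (β β₁ : ℝ)
    (hsmooth : ∀ j, ∀ z w : EuclideanSpace ℝ (Fin dd),
      ‖gradient (g j) z - gradient (g j) w‖ ≤ β * ‖z - w‖)
    (hlip : ∀ j, ∀ z w : EuclideanSpace ℝ (Fin dd),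
      (∀ l, g l z ≤ 0) → (∀ l, g l w ≤ 0) → |g j z - g j w| ≤ β₁ * ‖z - w‖)
    (M : ℝ)
    (x y : EuclideanSpace ℝ (Fin dd))
    (hx : ∀ j, g j x < 0) (hy : ∀ j, g j y < 0)
    (hMx : ∀ j, -(g j x)⁻¹ ≤ M) (hMy : ∀ j, -(g j y)⁻¹ ≤ M)
    (B : EuclideanSpace ℝ (Fin dd) → ℝ) (hB : ∀ z, B z = ∑ j, -(g j z)⁻¹) :
    ‖gradient B y - gradient B x‖^2 / ((8 * β₁^2 * M^3 + 4 * β * M^2) * qq) ≤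
      B y - B x - ⟪gradient B x, y - x⟫ := by
  rcases eq_or_ne x y with rfl | hxy
  · simp
  have hxy' : 0 < ‖x - y‖ := by simpa [dist_eq_norm] using dist_pos.2 hxy
  have hβ (j) : 0 ≤ β :=
    nonneg_of_mul_nonneg_left ((norm_nonneg _).trans (hsmooth j x y)) hxy'
  have hβ₁ (j) : 0 ≤ β₁ := nonneg_of_mul_nonneg_left
    ((abs_nonneg _).trans (hlip j x y (fun l => (hx l).le) (fun l => (hy l).le))) hxy'
  have hφ (z) (hz : ∀ j, g j z < 0) : ∀ j ∈ univ, DifferentiableAt ℝ (fun w => -(g j w)⁻¹) z :=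
    fun j _ => ((hdiff j z).inv (hz j).ne).neg
  obtain rfl : B = fun z => ∑ j, -(g j z)⁻¹ := funext hB
  change _ ≤ bregmanDiv (fun z => ∑ j, -(g j z)⁻¹) x y
  rw [bregmanDiv_fun_sum _ (hφ x hx), gradient_fun_sum _ (hφ x hx), gradient_fun_sum _ (hφ y hy)]
  simpa [sum_sub_distrib] using sq_norm_sum_div_le_sum univ
    (fun j => gradient (fun w => -(g j w)⁻¹) y - gradient (fun w => -(g j w)⁻¹) x)
    (fun j => bregmanDiv (fun w => -(g j w)⁻¹) x y) (8 * β₁ ^ 2 * M ^ 3 + 4 * β * M ^ 2)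
    (fun j _ => (hconv j).bregmanDiv_neg_inv_nonneg (hdiff j) (hx j) (hy j))
    (fun j _ => (hconv j).sq_norm_gradient_neg_inv_sub_le (hdiff j) (hβ j) (hsmooth j) (hx j)
      (hy j) (hMx j) (hMy j) (norm_gradient_le_of_lipschitzOn_feasible hdiff (hβ₁ j) hlip hy j))

/-- local smoothness of the multi-constraint inverse barrier.
`g¹,…,g^q` convex, `β`-smooth, `β₁`-Lipschitz on `{z : gʲ z ≤ 0 ∀ j}`, and
`B z = ∑ j, −1/gʲ z`.  If `M > 0` and `x, y` satisfy `gʲ x < 0`, `gʲ y < 0`,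
`−1/gʲ x ≤ M`, `−1/gʲ y ≤ M` for every `j`, then
`B y − B x − ⟪∇B x, y − x⟫ ≥ ‖∇B y − ∇B x‖² / ((8 β₁² M³ + 4 β M²) q)`. -/
theorem stmt_16 (dd qq : ℕ) (g : Fin qq → EuclideanSpace ℝ (Fin dd) → ℝ)
    (hconv : ∀ j, ConvexOn ℝ Set.univ (g j))
    (hdiff : ∀ j, Differentiable ℝ (g j))
    (β β₁ : ℝ)
    (hsmooth : ∀ j, ∀ z w : EuclideanSpace ℝ (Fin dd),
      ‖gradient (g j) z - gradient (g j) w‖ ≤ β * ‖z - w‖)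
    (hlip : ∀ j, ∀ z w : EuclideanSpace ℝ (Fin dd),
      (∀ l, g l z ≤ 0) → (∀ l, g l w ≤ 0) → |g j z - g j w| ≤ β₁ * ‖z - w‖)
    (M : ℝ) (hM : 0 < M)
    (x y : EuclideanSpace ℝ (Fin dd))
    (hx : ∀ j, g j x < 0) (hy : ∀ j, g j y < 0)
    (hMx : ∀ j, -(g j x)⁻¹ ≤ M) (hMy : ∀ j, -(g j y)⁻¹ ≤ M)
    (B : EuclideanSpace ℝ (Fin dd) → ℝ) (hB : ∀ z, B z = ∑ j, -(g j z)⁻¹) :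
    ‖gradient B y - gradient B x‖^2 / ((8 * β₁^2 * M^3 + 4 * β * M^2) * qq) ≤
      B y - B x - ⟪gradient B x, y - x⟫ :=
  stmt_16_general dd qq g hconv hdiff β β₁ hsmooth hlip M x y hx hy hMx hMy B hB
end
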